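/- Let m ≥ 3, let G be a finite simple loopless graph, and let f : F Hom(K₂,C_m) → F Hom(K₂,G) be a monotone map satisfying f((B,A)) = τ·f((A,B)) for all (A,B). Define θ_m(f) : ℤ/3m → (nonempty subsets of V(G)) by θ_m(f)(3k) = the second component of f(({k},{k−1})), θ_m(f)(3k+1) = the first component of f(({k},{k−1,k+1})), and θ_m(f)(3k+2) = the second component of f(({k},{k+1})), all indices taken mod m. Then θ_m(f) is a multihomomorphism from C_{3m} to G, and θ_m is equivariant: θ_m(f ∘ R_m) = θ_m(f) ∘ β_{3m}, where R_m is the involution of F Hom(K₂,C_m) applying v ↦ m−1−v (mod m) elementwise to both components of a pair, and β_{3m} is the involution v ↦ 3m−1−v of ℤ/3m. -/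

import Mathlib

open Metric unitInterval

noncomputable section

/-- The unit sphere `S^k` in `ℝ^(k+1)`. -/
abbrev Sph (k : ℕ) : Type := Metric.sphere (0 : EuclideanSpace ℝ (Fin (k+1))) 1

/-- `φ` is a multihomomorphism from `G` to `H`. -/
def IsMultihom {V W : Type*} (G : SimpleGraph V) (H : SimpleGraph W)
    (φ : V → Set W) : Prop :=
  (∀ v, (φ v).Nonempty) ∧ ∀ ⦃u v⦄, G.Adj u v → ∀ a ∈ φ u, ∀ b ∈ φ v, H.Adj a b

/-- The Hom space `|Hom(G,H)|`. -/
def HomSpace {V W : Type*} [Fintype W] (G : SimpleGraph V) (H : SimpleGraph W) : Type _ :=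
  {x : V → stdSimplex ℝ W // IsMultihom G H fun v => {w | (x v : W → ℝ) w ≠ 0}}

instance {V W : Type*} [Fintype W] (G : SimpleGraph V) (H : SimpleGraph W) :
    TopologicalSpace (HomSpace G H) :=
  inferInstanceAs (TopologicalSpace {_x : V → stdSimplex ℝ W // _})

/-- The map `|Hom(G,H)| → |Hom(G',H)|` induced by a graph homomorphism `κ : G' → G`;
for `G' = G` and `κ` an involution this is the induced (left) involution. -/
def pull {V V' W : Type*} [Fintype W] {G : SimpleGraph V} {G' : SimpleGraph V'}
    {H : SimpleGraph W} (κ : G' →g G) (x : HomSpace G H) : HomSpace G' H :=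
  ⟨fun v => x.1 (κ v), fun v => x.2.1 (κ v), fun _ _ huv => x.2.2 (κ.map_adj huv)⟩

/-- The (right) involution of `|Hom(G,H)|` induced by an involution `β` of `H`. -/
def rightAct {V W : Type*} [Fintype W] {G : SimpleGraph V} {H : SimpleGraph W}
    (β : H →g H) (hβ : Function.Involutive β) (x : HomSpace G H) : HomSpace G H :=
  ⟨fun v => ⟨fun b => (x.1 v : W → ℝ) (β b),
    fun b => (x.1 v).2.1 (β b),
    by
      rw [← (x.1 v).2.2]
      exact Fintype.sum_bijective β hβ.bijective _ _ fun b => rfl⟩,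
   fun v => by
      obtain ⟨w, hw⟩ := x.2.1 v
      exact ⟨β w, by change (x.1 v : W → ℝ) (β (β w)) ≠ 0; rw [hβ w]; exact hw⟩,
   fun u v huv a ha b hb => by
      have := x.2.2 huv (β a) ha (β b) hb
      simpa [hβ a, hβ b] using β.map_adj this⟩

/-- The complete graph `K₂` on `{0,1}`. -/
abbrev K2 : SimpleGraph (Fin 2) := SimpleGraph.completeGraph (Fin 2)

/-- The flip involution of `K₂`. -/
def flipK2 : K2 →g K2 :=
  ⟨fun v => 1 - v, fun {a b} h => by fin_cases a <;> fin_cases b <;> simp_all⟩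

/-- The cycle `C_m` on `ℤ/m`. -/
def cycle (m : ℕ) : SimpleGraph (ZMod m) where
  Adj u v := u ≠ v ∧ (u + 1 = v ∨ v + 1 = u)
  symm := ⟨fun _ _ h => ⟨h.1.symm, h.2.symm⟩⟩
  loopless := ⟨fun _ h => h.1 rfl⟩

/-- The involution `v ↦ (m-1) - v = -1 - v` of the cycle `C_m`. -/
def cycFlip (m : ℕ) : cycle m →g cycle m :=
  ⟨fun v => -1 - v, fun {a b} h => by
    refine ⟨fun e => h.1 (sub_right_injective e), ?_⟩
    rcases h.2 with e | e
    · exact Or.inr (by rw [← e]; ring)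
    · exact Or.inl (by rw [← e]; ring)⟩

/-- `X` is `m`-connected: nonempty, path-connected, and `πᵢ X` trivial for `1 ≤ i ≤ m`. -/
def MConnected (m : ℕ) (X : Type*) [TopologicalSpace X] : Prop :=
  Nonempty X ∧ PathConnectedSpace X ∧
    ∀ i, 1 ≤ i → i ≤ m → ∀ x : X, Subsingleton (HomotopyGroup (Fin i) X x)

end

noncomputable section

/-- The poset `F Hom(K₂, H)`: pairs `(A,B)` of nonempty sets of vertices with every
element of `A` adjacent to every element of `B`, ordered by componentwise inclusion. -/
def EdgePairs {W : Type*} (H : SimpleGraph W) : Type _ :=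
  {p : Set W × Set W // p.1.Nonempty ∧ p.2.Nonempty ∧ ∀ a ∈ p.1, ∀ b ∈ p.2, H.Adj a b}

instance {W : Type*} (H : SimpleGraph W) : Preorder (EdgePairs H) where
  le p q := p.1.1 ⊆ q.1.1 ∧ p.1.2 ⊆ q.1.2
  le_refl p := ⟨subset_rfl, subset_rfl⟩
  le_trans p q r h1 h2 := ⟨h1.1.trans h2.1, h1.2.trans h2.2⟩

/-- The involution `τ·(A,B) = (B,A)` of `F Hom(K₂, H)`. -/
def epSwap {W : Type*} {H : SimpleGraph W} (p : EdgePairs H) : EdgePairs H :=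
  ⟨(p.1.2, p.1.1), p.2.2.1, p.2.1, fun a ha b hb => (p.2.2.2 b hb a ha).symm⟩

lemma zmod_one_ne_zero (m : ℕ) (hm : 3 ≤ m) : (1 : ZMod m) ≠ 0 := by
  haveI : NeZero m := ⟨by omega⟩
  haveI : Fact (1 < m) := ⟨by omega⟩
  exact one_ne_zero

lemma cycle_adj_succ (m : ℕ) (hm : 3 ≤ m) (k : ZMod m) : (cycle m).Adj k (k + 1) :=
  ⟨fun e => zmod_one_ne_zero m hm (by linear_combination -e), Or.inl rfl⟩

lemma cycle_adj_pred (m : ℕ) (hm : 3 ≤ m) (k : ZMod m) : (cycle m).Adj k (k - 1) :=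
  ⟨fun e => zmod_one_ne_zero m hm (by linear_combination e), Or.inr (by ring)⟩

/-- The multihomomorphism `({k}, {k-1}) : K₂ → C_m`. -/
def pairA (m : ℕ) (hm : 3 ≤ m) (k : ZMod m) : EdgePairs (cycle m) :=
  ⟨({k}, {k - 1}), Set.singleton_nonempty _, Set.singleton_nonempty _, by
    intro a ha b hb
    rw [Set.mem_singleton_iff] at ha hb
    subst ha; subst hb
    exact cycle_adj_pred m hm _⟩

/-- The multihomomorphism `({k}, {k-1, k+1}) : K₂ → C_m`. -/
def pairB (m : ℕ) (hm : 3 ≤ m) (k : ZMod m) : EdgePairs (cycle m) :=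
  ⟨({k}, {k - 1, k + 1}), Set.singleton_nonempty _, Set.insert_nonempty _ _, by
    intro a ha b hb
    rw [Set.mem_singleton_iff] at ha
    subst ha
    rcases hb with rfl | hb
    · exact cycle_adj_pred m hm a
    · rw [Set.mem_singleton_iff] at hb
      subst hb
      exact cycle_adj_succ m hm a⟩

/-- The multihomomorphism `({k}, {k+1}) : K₂ → C_m`. -/
def pairC (m : ℕ) (hm : 3 ≤ m) (k : ZMod m) : EdgePairs (cycle m) :=
  ⟨({k}, {k + 1}), Set.singleton_nonempty _, Set.singleton_nonempty _, by
    intro a ha b hb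
    rw [Set.mem_singleton_iff] at ha hb
    subst ha; subst hb
    exact cycle_adj_succ m hm _⟩

/-- The map `θ_m`. -/
def theta (m : ℕ) (hm : 3 ≤ m) {V : Type*} (G : SimpleGraph V)
    (f : EdgePairs (cycle m) → EdgePairs G) : ZMod (3 * m) → Set V := fun v =>
  if v.val % 3 = 0 then (f (pairA m hm ((v.val / 3 : ℕ) : ZMod m))).1.2
  else if v.val % 3 = 1 then (f (pairB m hm ((v.val / 3 : ℕ) : ZMod m))).1.1
  else (f (pairC m hm ((v.val / 3 : ℕ) : ZMod m))).1.2

/-- The involution `R_m` of `F Hom(K₂, C_m)`, applying `v ↦ -1-v` elementwise. -/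
def rMap (m : ℕ) : EdgePairs (cycle m) → EdgePairs (cycle m) := fun p =>
  ⟨((fun v => -1 - v) '' p.1.1, (fun v => -1 - v) '' p.1.2),
   p.2.1.image _, p.2.2.1.image _, by
     rintro a ⟨a', ha', rfl⟩ b ⟨b', hb', rfl⟩
     exact (cycFlip m).map_adj (p.2.2.2 a' ha' b' hb')⟩

/-- The map `η_m(φ)` induced by a multihomomorphism `φ : C_m → G`. -/
def etaMap (m : ℕ) {V : Type*} {G : SimpleGraph V} (φ : ZMod m → Set V)
    (hφ : IsMultihom (cycle m) G φ) : EdgePairs (cycle m) → EdgePairs G := fun p =>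
  ⟨(⋃ v ∈ p.1.1, φ v, ⋃ v ∈ p.1.2, φ v),
   by obtain ⟨v0, hv0⟩ := p.2.1
      obtain ⟨w, hw⟩ := hφ.1 v0
      exact ⟨w, Set.mem_biUnion hv0 hw⟩,
   by obtain ⟨v0, hv0⟩ := p.2.2.1
      obtain ⟨w, hw⟩ := hφ.1 v0
      exact ⟨w, Set.mem_biUnion hv0 hw⟩,
   by intro a ha b hb
      rw [Set.mem_iUnion₂] at ha hb
      obtain ⟨u, hu, hau⟩ := ha
      obtain ⟨v, hv, hbv⟩ := hb
      exact hφ.2 (p.2.2.2 u hu v hv) a hau b hbv⟩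

/-- The multihomomorphism `i_m(φ) : C_{3m} → G`. -/
def iMap (m : ℕ) {V : Type*} (φ : ZMod m → Set V) : ZMod (3 * m) → Set V := fun v =>
  if v.val % 3 = 0 then φ (((v.val / 3 : ℕ) : ZMod m) - 1)
  else if v.val % 3 = 1 then φ ((v.val / 3 : ℕ) : ZMod m)
  else φ (((v.val / 3 : ℕ) : ZMod m) + 1)

/-- The element `3k` of `ℤ/3m` associated to `k ∈ ℤ/m`. -/
def tri (m : ℕ) (k : ZMod m) : ZMod (3 * m) := ((3 * k.val : ℕ) : ZMod (3 * m))

end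

/-! Every vertex of `ℤ/3m` is `3k`, `3k+1` or `3k+2`, where `3k = tri m k`. Two consecutive
values of `θ` lie on opposite sides of a single pair `f p`: for `3k, 3k+1` and `3k+1, 3k+2`
this is `p = ({k}, {k-1,k+1})`, using monotonicity of `f` along `({k},{k∓1}) ≤ p`; for
`3k+2, 3k+3` it is `p = ({k},{k+1})`, because `({k+1},{k}) = τ p` and `f` commutes with `τ`.
Equivariance holds because `R_m` sends the three pairs at `k` to those at `-1-k` in reverse
order, matching `-1 - (3k + r) = 3(-1-k) + (2 - r)`. -/

section Tri

variable {m : ℕ}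

lemma tri_natCast (n : ℕ) : tri m (n : ZMod m) = ((3 * n : ℕ) : ZMod (3 * m)) := by
  rw [tri, ZMod.natCast_eq_natCast_iff', ZMod.val_natCast, Nat.mul_mod_mul_left,
    Nat.mul_mod_mul_left, Nat.mod_mod]

lemma tri_add [NeZero m] (k l : ZMod m) : tri m (k + l) = tri m k + tri m l := by
  rw [← ZMod.natCast_zmod_val k, ← ZMod.natCast_zmod_val l, ← Nat.cast_add, tri_natCast,
    tri_natCast, tri_natCast]
  push_cast
  ring

lemma tri_one : tri m 1 = 3 := by
  simpa using tri_natCast (m := m) 1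

lemma tri_add_one [NeZero m] (k : ZMod m) : tri m (k + 1) = tri m k + 3 := by
  rw [tri_add, tri_one]

lemma tri_neg_one_sub [NeZero m] (k : ZMod m) : tri m (-1 - k) = -3 - tri m k := by
  have h : tri m (-1 - k) + tri m (k + 1) = 0 := by
    rw [← tri_add, show -1 - k + (k + 1) = ((0 : ℕ) : ZMod m) by push_cast; ring, tri_natCast]
    simp
  linear_combination h - tri_add_one k

lemma val_tri_add_natCast [NeZero m] (k : ZMod m) {r : ℕ} (hr : r < 3) :
    (tri m k + r).val = 3 * k.val + r := by
  rw [tri, ← Nat.cast_add, ZMod.val_cast_of_lt]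
  have := k.val_lt
  omega

lemma exists_eq_tri_add [NeZero m] (v : ZMod (3 * m)) :
    ∃ k : ZMod m, v = tri m k ∨ v = tri m k + 1 ∨ v = tri m k + 2 := by
  obtain ⟨q, r, hr, rfl⟩ : ∃ q r : ℕ, r < 3 ∧ v = ((3 * q + r : ℕ) : ZMod (3 * m)) :=
    ⟨v.val / 3, v.val % 3, Nat.mod_lt _ (by norm_num), by
      rw [Nat.div_add_mod, ZMod.natCast_zmod_val]⟩
  refine ⟨q, ?_⟩
  rw [tri_natCast]
  interval_cases r <;> simp

end Tri

section Theta

variable {m : ℕ} (hm : 3 ≤ m) {V : Type*} {G : SimpleGraph V}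
  (f : EdgePairs (cycle m) → EdgePairs G)

lemma pairA_le_pairB (k : ZMod m) : pairA m hm k ≤ pairB m hm k :=
  ⟨subset_rfl, fun _ hx => Or.inl hx⟩

lemma pairC_le_pairB (k : ZMod m) : pairC m hm k ≤ pairB m hm k :=
  ⟨subset_rfl, fun _ hx => Or.inr hx⟩

lemma pairA_add_one (k : ZMod m) : pairA m hm (k + 1) = epSwap (pairC m hm k) :=
  Subtype.ext (by simp [pairA, pairC, epSwap])

lemma rMap_pairA (k : ZMod m) : rMap m (pairA m hm k) = pairC m hm (-1 - k) := by
  apply Subtype.ext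
  have h : (-1 : ZMod m) - (k - 1) = -1 - k + 1 := by ring
  simp [rMap, pairA, pairC, h]

lemma rMap_pairB (k : ZMod m) : rMap m (pairB m hm k) = pairB m hm (-1 - k) := by
  apply Subtype.ext
  have h₁ : (-1 : ZMod m) - (k - 1) = -1 - k + 1 := by ring
  have h₂ : (-1 : ZMod m) - (k + 1) = -1 - k - 1 := by ring
  simp only [rMap, pairB, Set.image_singleton, Set.image_insert_eq, h₁, h₂, Set.pair_comm]

lemma rMap_pairC (k : ZMod m) : rMap m (pairC m hm k) = pairA m hm (-1 - k) := by
  apply Subtype.ext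
  have h : (-1 : ZMod m) - (k + 1) = -1 - k - 1 := by ring
  simp [rMap, pairA, pairC, h]

lemma theta_tri_add_natCast (k : ZMod m) {r : ℕ} (hr : r < 3) :
    theta m hm G f (tri m k + r) =
      if r = 0 then (f (pairA m hm k)).1.2
      else if r = 1 then (f (pairB m hm k)).1.1
      else (f (pairC m hm k)).1.2 := by
  have : NeZero m := ⟨by omega⟩
  have hdiv : (3 * k.val + r) / 3 = k.val := by omega
  have hmod : (3 * k.val + r) % 3 = r := by omega
  simp only [theta, val_tri_add_natCast k hr, hdiv, hmod, ZMod.natCast_zmod_val]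

lemma theta_tri (k : ZMod m) : theta m hm G f (tri m k) = (f (pairA m hm k)).1.2 := by
  simpa using theta_tri_add_natCast hm f k (r := 0) (by norm_num)

lemma theta_tri_add_one (k : ZMod m) :
    theta m hm G f (tri m k + 1) = (f (pairB m hm k)).1.1 := by
  simpa using theta_tri_add_natCast hm f k (r := 1) (by norm_num)

lemma theta_tri_add_two (k : ZMod m) :
    theta m hm G f (tri m k + 2) = (f (pairC m hm k)).1.2 := by
  simpa using theta_tri_add_natCast hm f k (r := 2) (by norm_num)

lemma theta_nonempty (v : ZMod (3 * m)) : (theta m hm G f v).Nonempty := by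
  unfold theta
  split_ifs
  exacts [(f _).2.2.1, (f _).2.1, (f _).2.2.1]

lemma theta_adj_add_one (hmono : Monotone f) (hodd : ∀ p, f (epSwap p) = epSwap (f p))
    (u : ZMod (3 * m)) : ∀ a ∈ theta m hm G f u, ∀ b ∈ theta m hm G f (u + 1), G.Adj a b := by
  have : NeZero m := ⟨by omega⟩
  intro a ha b hb
  obtain ⟨k, rfl | rfl | rfl⟩ := exists_eq_tri_add u
  · rw [theta_tri] at ha
    rw [theta_tri_add_one] at hb
    exact ((f _).2.2.2 b hb a ((hmono (pairA_le_pairB hm k)).2 ha)).symm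
  · rw [theta_tri_add_one] at ha
    rw [add_assoc, one_add_one_eq_two, theta_tri_add_two] at hb
    exact (f _).2.2.2 a ha b ((hmono (pairC_le_pairB hm k)).2 hb)
  · rw [theta_tri_add_two] at ha
    rw [add_assoc, two_add_one_eq_three, ← tri_add_one, theta_tri, pairA_add_one, hodd] at hb
    exact ((f _).2.2.2 b hb a ha).symm

lemma isMultihom_theta (hmono : Monotone f) (hodd : ∀ p, f (epSwap p) = epSwap (f p)) :
    IsMultihom (cycle (3 * m)) G (theta m hm G f) := by
  refine ⟨theta_nonempty hm f, fun u v huv => ?_⟩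
  rcases huv.2 with rfl | rfl
  · exact theta_adj_add_one hm f hmono hodd u
  · exact fun a ha b hb => (theta_adj_add_one hm f hmono hodd v b hb a ha).symm

lemma theta_comp_rMap (v : ZMod (3 * m)) :
    theta m hm G (f ∘ rMap m) v = theta m hm G f (-1 - v) := by
  have : NeZero m := ⟨by omega⟩
  obtain ⟨k, rfl | rfl | rfl⟩ := exists_eq_tri_add v
  · rw [show -1 - tri m k = tri m (-1 - k) + 2 by rw [tri_neg_one_sub]; ring]
    rw [theta_tri, theta_tri_add_two, Function.comp_apply, rMap_pairA]
  · rw [show -1 - (tri m k + 1) = tri m (-1 - k) + 1 by rw [tri_neg_one_sub]; ring]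
    rw [theta_tri_add_one, theta_tri_add_one, Function.comp_apply, rMap_pairB]
  · rw [show -1 - (tri m k + 2) = tri m (-1 - k) by rw [tri_neg_one_sub]; ring]
    rw [theta_tri_add_two, theta_tri, Function.comp_apply, rMap_pairC]

end Theta

theorem theta_multihom_and_equivariant (m : ℕ) (hm : 3 ≤ m) {V : Type*} (G : SimpleGraph V)
    (f : EdgePairs (cycle m) → EdgePairs G) (hmono : Monotone f)
    (hodd : ∀ p, f (epSwap p) = epSwap (f p)) :
    IsMultihom (cycle (3 * m)) G (theta m hm G f) ∧
    theta m hm G (f ∘ rMap m) = fun v : ZMod (3 * m) => theta m hm G f (-1 - v) :=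
  ⟨isMultihom_theta hm f hmono hodd, funext (theta_comp_rMap hm f)⟩
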